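/- Let m ≥ 3, n = 2^m − 1, and w = 2^{m−1} − 1. Let H ∈ 𝔽₂^{n×n} be a matrix such that every row and every column of H has Hamming weight exactly w, and such that the supports of any two distinct rows of H intersect in exactly 2^{m−2} − 1 positions. Then every nonzero pseudocodeword x ∈ K(H) satisfies w_AWGNC(x) ≥ 3 + 1/(2^{m−2} − 1); in particular w_AWGNC^min(H) > 3, and for m = 3 (so n = 7) one has w_AWGNC^min(H) ≥ 4. -/

import Mathlib

open Matrix BigOperators Finset

section Defs

variable {J I : Type*} [Fintype J] [Fintype I] [DecidableEq I]

/-- The support of row `j` of a binary matrix `H`. -/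
def rowSupp (H : Matrix J I (ZMod 2)) (j : J) : Finset I :=
  Finset.univ.filter fun i => H j i = 1

/-- The fundamental cone of a binary matrix `H`. -/
def fundCone (H : Matrix J I (ZMod 2)) : Set (I → ℝ) :=
  {x | (∀ i, 0 ≤ x i) ∧
    ∀ j : J, ∀ ℓ ∈ rowSupp H j, x ℓ ≤ ∑ i ∈ (rowSupp H j).erase ℓ, x i}

/-- BEC pseudoweight: size of the support. -/
noncomputable def wBEC (x : I → ℝ) : ℝ := ({i | x i ≠ 0}.ncard : ℝ)

/-- AWGNC pseudoweight. -/
noncomputable def wAWGNC (x : I → ℝ) : ℝ := (∑ i, x i) ^ 2 / ∑ i, x i ^ 2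

/-- Max-fractional weight. -/
noncomputable def wMaxFrac (x : I → ℝ) : ℝ := (∑ i, x i) / sSup (Set.range x)

/-- `H` is a parity-check matrix of the code `C`. -/
def IsParityCheck (H : Matrix J I (ZMod 2)) (C : Submodule (ZMod 2) (I → ZMod 2)) : Prop :=
  ∀ c, c ∈ C ↔ H.mulVec c = 0

/-- Minimum Hamming distance of a code. -/
noncomputable def minDist (C : Submodule (ZMod 2) (I → ZMod 2)) : ℕ :=
  sInf {d | ∃ c ∈ C, c ≠ 0 ∧ hammingNorm c = d}

/-- Minimum pseudoweight of `H` w.r.t. pseudoweight function `w`: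
the infimum of `w` over all nonzero pseudocodewords (`⊤` if there are none). -/
noncomputable def minPW (w : (I → ℝ) → ℝ) (H : Matrix J I (ZMod 2)) : EReal :=
  sInf ((fun x => (w x : EReal)) '' (fundCone H \ {0}))

/-- The chain (connectivity) relation associated with a binary matrix whose rows
have weight 2: `i` and `i'` are related iff they are equal or joined by a chain of rows
whose supports are exactly consecutive pairs. -/
def chainRel (H : Matrix J I (ZMod 2)) (i i' : I) : Prop :=
  i = i' ∨ ∃ ℓ : ℕ, 1 ≤ ℓ ∧ ∃ (c : Fin (ℓ + 1) → I) (r : Fin ℓ → J),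
    c 0 = i ∧ c (Fin.last ℓ) = i' ∧
    ∀ t : Fin ℓ, rowSupp H (r t) = {c t.castSucc, c t.succ}

/-- The 0-1 real matrix associated with a binary matrix. -/
def toRealMatrix (H : Matrix J I (ZMod 2)) : Matrix J I ℝ :=
  Matrix.of fun j i => if H j i = 1 then (1 : ℝ) else 0

/-- The Tanner graph of a binary matrix. -/
def tannerGraph (H : Matrix J I (ZMod 2)) : SimpleGraph (J ⊕ I) :=
  SimpleGraph.fromRel fun u v => ∃ j i, u = Sum.inl j ∧ v = Sum.inr i ∧ H j i = 1

end Defs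

/-- The multiset of (real) eigenvalues, with multiplicity, of a real square matrix:
the real roots of its characteristic polynomial. -/
noncomputable def eigMult {ι : Type*} [Fintype ι] [DecidableEq ι] (A : Matrix ι ι ℝ) :
    Multiset ℝ :=
  A.charpoly.roots

section FinDefs

variable {n : ℕ}

/-- The non-increasing rearrangement of a real vector. -/
noncomputable def sortDesc (x : Fin n → ℝ) : Fin n → ℝ :=
  fun i => x (Tuple.sort (fun j => -x j) i)

/-- `Φ(ξ) = ∫₀^ξ φ`, where `φ(ξ) = x'_i` for `i - 1 < ξ ≤ i` and `x'` is the
non-increasing rearrangement of `x`. -/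
noncomputable def bigPhi (x : Fin n → ℝ) (ξ : ℝ) : ℝ :=
  ∑ i : Fin n, sortDesc x i * min 1 (max 0 (ξ - (i : ℝ)))

/-- BSC pseudoweight: `2 Φ⁻¹(Φ(n)/2)`. -/
noncomputable def wBSC (x : Fin n → ℝ) : ℝ :=
  2 * sInf {ξ : ℝ | bigPhi x (n : ℝ) / 2 ≤ bigPhi x ξ}

/-- The pseudocodeword redundancy of a code `C` w.r.t. the pseudoweight function `w`:
the smallest number of rows of a parity-check matrix `H` of `C` whose minimum
pseudoweight equals the minimum distance of `C` (`⊤` if there is no such matrix). -/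
noncomputable def pcRedundancy (w : (Fin n → ℝ) → ℝ)
    (C : Submodule (ZMod 2) (Fin n → ZMod 2)) : ℕ∞ :=
  sInf {k : ℕ∞ | ∃ (m : ℕ) (H : Matrix (Fin m) (Fin n) (ZMod 2)),
    k = (m : ℕ∞) ∧ IsParityCheck H C ∧ minPW w H = ((minDist C : ℝ) : EReal)}

end FinDefs

/-!
Let `A` be the real 0/1 matrix of `H`, `k = 2^(m-1) - 1` and `λ = 2^(m-2) - 1`, so
`A Aᵀ = (k - λ) I + λ J`. Since `A` is invertible (`A Aᵀ` is positive definite) and commutes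
with the all-ones matrix `J` (all row and column sums are `k`), also `Aᵀ A = (k - λ) I + λ J`:
`H` is a symmetric design whose dual has the same parameters. Hence
`∑ⱼ (∑_{i ∈ Iⱼ} xᵢ)² = (k - λ) ‖x‖² + λ (∑ xᵢ)²`.
For `x` in the fundamental cone each row satisfies `2 xₗ ≤ ∑_{i ∈ Iⱼ} xᵢ`, so
`2 ∑_{i ∈ Iⱼ} xᵢ² ≤ (∑_{i ∈ Iⱼ} xᵢ)²`; summing over rows (each column meets `k` rows) gives
`2k ‖x‖² ≤ (k - λ) ‖x‖² + λ (∑ xᵢ)²`, that is `w_AWGNC(x) ≥ 1 + k / λ = 3 + 1 / λ`.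
-/

local notation "𝕁" => Matrix.of fun (_ _ : _) => (1 : ℝ)

namespace Matrix

variable {ι : Type*} [Fintype ι] [DecidableEq ι]

theorem dotProduct_smul_one_add_smul_ones_mulVec (a b : ℝ) (x : ι → ℝ) :
    x ⬝ᵥ ((a • 1 + b • 𝕁) *ᵥ x) = a * ∑ i, x i ^ 2 + b * (∑ i, x i) ^ 2 := by
  have hones : (𝕁 : Matrix ι ι ℝ) *ᵥ x = fun _ => ∑ i, x i := by
    ext; simp [mulVec, dotProduct]
  rw [add_mulVec, smul_mulVec, smul_mulVec, one_mulVec, hones, dotProduct_add,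
    dotProduct_smul, dotProduct_smul]
  simp only [dotProduct, smul_eq_mul, ← Finset.sum_mul, sq]

theorem posDef_smul_one_add_smul_ones {a b : ℝ} (ha : 0 < a) (hb : 0 ≤ b) :
    (a • 1 + b • 𝕁 : Matrix ι ι ℝ).PosDef := by
  have hones : (𝕁 : Matrix ι ι ℝ) = vecMulVec (fun _ : ι => (1 : ℝ)) (star fun _ => 1) := by
    ext; simp [vecMulVec_apply]
  exact (PosDef.one.smul ha).add_posSemidef (hones ▸ posSemidef_vecMulVec_self_star _ |>.smul hb)

theorem transpose_mul_self_eq_of_mul_transpose_eq {A : Matrix ι ι ℝ} {a b : ℝ}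
    (ha : 0 < a) (hb : 0 ≤ b) (hA : A * Aᵀ = a • 1 + b • 𝕁) (hcomm : A * 𝕁 = 𝕁 * A) :
    Aᵀ * A = a • 1 + b • 𝕁 := by
  have hdet : IsUnit A.det := by
    have := (posDef_smul_one_add_smul_ones (ι := ι) ha hb).isUnit
    rw [← hA, isUnit_iff_isUnit_det, det_mul, det_transpose] at this
    exact isUnit_of_mul_isUnit_left this
  calc Aᵀ * A = A⁻¹ * (A * Aᵀ) * A := by rw [nonsing_inv_mul_cancel_left _ _ hdet]
    _ = a • 1 + b • (A⁻¹ * (𝕁 * A)) := by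
      rw [hA, Matrix.mul_add, Matrix.add_mul, Matrix.mul_smul, Matrix.mul_smul, Matrix.smul_mul,
        Matrix.smul_mul, Matrix.mul_one, nonsing_inv_mul _ hdet, Matrix.mul_assoc]
    _ = a • 1 + b • 𝕁 := by rw [← hcomm, nonsing_inv_mul_cancel_left _ _ hdet]

theorem sum_mulVec_sq_eq_of_mul_transpose_eq {A : Matrix ι ι ℝ} {a b : ℝ}
    (ha : 0 < a) (hb : 0 ≤ b) (hA : A * Aᵀ = a • 1 + b • 𝕁) (hcomm : A * 𝕁 = 𝕁 * A)
    (x : ι → ℝ) : ∑ j, (A *ᵥ x) j ^ 2 = a * ∑ i, x i ^ 2 + b * (∑ i, x i) ^ 2 := by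
  rw [← dotProduct_smul_one_add_smul_ones_mulVec,
    ← transpose_mul_self_eq_of_mul_transpose_eq ha hb hA hcomm, ← mulVec_mulVec,
    dotProduct_mulVec, vecMul_transpose]
  simp only [dotProduct, sq]

end Matrix

theorem two_mul_sum_sq_le_sq_sum {ι : Type*} [DecidableEq ι] {s : Finset ι} {x : ι → ℝ}
    (hx : ∀ i ∈ s, 0 ≤ x i) (hle : ∀ ℓ ∈ s, x ℓ ≤ ∑ i ∈ s.erase ℓ, x i) :
    2 * ∑ i ∈ s, x i ^ 2 ≤ (∑ i ∈ s, x i) ^ 2 := by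
  have hhalf : ∀ ℓ ∈ s, 2 * x ℓ ≤ ∑ i ∈ s, x i := fun ℓ hℓ => by
    linarith [hle ℓ hℓ, Finset.add_sum_erase s x hℓ]
  calc 2 * ∑ i ∈ s, x i ^ 2 = ∑ i ∈ s, 2 * x i * x i := by
        rw [Finset.mul_sum]; exact Finset.sum_congr rfl fun i _ => by ring
    _ ≤ ∑ i ∈ s, (∑ i ∈ s, x i) * x i :=
        Finset.sum_le_sum fun i hi => mul_le_mul_of_nonneg_right (hhalf i hi) (hx i hi)
    _ = (∑ i ∈ s, x i) ^ 2 := by rw [← Finset.mul_sum, sq]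

theorem toRealMatrix_mulVec_apply {J I : Type*} [Fintype I] (H : Matrix J I (ZMod 2))
    (x : I → ℝ) (j : J) : (toRealMatrix H *ᵥ x) j = ∑ i ∈ rowSupp H j, x i := by
  simp [mulVec, dotProduct, toRealMatrix, rowSupp, Finset.sum_filter]

theorem sum_sum_rowSupp {J I : Type*} [Fintype J] [Fintype I] (H : Matrix J I (ZMod 2))
    (f : I → ℝ) : ∑ j, ∑ i ∈ rowSupp H j, f i = ∑ i, (#{j | H j i = 1} : ℝ) * f i := by
  simp only [rowSupp, Finset.sum_filter]
  rw [Finset.sum_comm]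
  simp [Finset.sum_ite, Finset.sum_const]

theorem toRealMatrix_mul_transpose_apply {J I : Type*} [Fintype I] [DecidableEq I]
    (H : Matrix J I (ZMod 2)) (j j' : J) :
    (toRealMatrix H * (toRealMatrix H)ᵀ) j j' = #(rowSupp H j ∩ rowSupp H j') := by
  rw [rowSupp, rowSupp, ← Finset.filter_and, Finset.natCast_card_filter]
  refine Finset.sum_congr rfl fun i _ => ?_
  simp only [transpose_apply, toRealMatrix, of_apply, mul_ite, mul_one, mul_zero, ite_and]
  split_ifs <;> rfl

theorem toRealMatrix_mul_ones_comm {ι : Type*} [Fintype ι] {H : Matrix ι ι (ZMod 2)} {k : ℕ}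
    (hrow : ∀ j, #(rowSupp H j) = k) (hcol : ∀ i, #{j | H j i = 1} = k) :
    toRealMatrix H * 𝕁 = 𝕁 * toRealMatrix H := by
  ext j i
  simpa [mul_apply, toRealMatrix, Finset.sum_boole, hcol, rowSupp] using hrow j

section SymmetricDesign

variable {ι : Type*} [Fintype ι] [DecidableEq ι] {H : Matrix ι ι (ZMod 2)} {k l : ℕ}

theorem toRealMatrix_mul_transpose_eq (hrow : ∀ j, #(rowSupp H j) = k)
    (hint : ∀ j j', j ≠ j' → #(rowSupp H j ∩ rowSupp H j') = l) :
    toRealMatrix H * (toRealMatrix H)ᵀ = ((k : ℝ) - l) • 1 + (l : ℝ) • 𝕁 := by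
  ext j j'
  rw [toRealMatrix_mul_transpose_apply]
  by_cases h : j = j'
  · subst h; simp [hrow]
  · simp [h, hint j j' h]

theorem sum_sq_le_of_mem_fundCone (hlk : l < k) (hrow : ∀ j, #(rowSupp H j) = k)
    (hcol : ∀ i, #{j | H j i = 1} = k)
    (hint : ∀ j j', j ≠ j' → #(rowSupp H j ∩ rowSupp H j') = l) {x : ι → ℝ}
    (hx : x ∈ fundCone H) : ((k : ℝ) + l) * ∑ i, x i ^ 2 ≤ l * (∑ i, x i) ^ 2 := by
  obtain ⟨hx0, hxrow⟩ := hx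
  have hrows : 2 * ∑ j, ∑ i ∈ rowSupp H j, x i ^ 2 ≤ ∑ j, (∑ i ∈ rowSupp H j, x i) ^ 2 := by
    rw [Finset.mul_sum]
    exact Finset.sum_le_sum fun j _ => two_mul_sum_sq_le_sq_sum (fun i _ => hx0 i) (hxrow j)
  have hcount : ∑ j, ∑ i ∈ rowSupp H j, x i ^ 2 = k * ∑ i, x i ^ 2 := by
    simp [sum_sum_rowSupp, hcol, Finset.mul_sum]
  have hnorm := sum_mulVec_sq_eq_of_mul_transpose_eq (sub_pos.2 (by exact_mod_cast hlk))
    l.cast_nonneg (toRealMatrix_mul_transpose_eq hrow hint) (toRealMatrix_mul_ones_comm hrow hcol) x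
  simp only [toRealMatrix_mulVec_apply] at hnorm
  linarith

theorem le_wAWGNC_of_mem_fundCone (hl : 0 < l) (hlk : l < k) (hrow : ∀ j, #(rowSupp H j) = k)
    (hcol : ∀ i, #{j | H j i = 1} = k)
    (hint : ∀ j j', j ≠ j' → #(rowSupp H j ∩ rowSupp H j') = l) {x : ι → ℝ}
    (hx : x ∈ fundCone H \ {0}) : 1 + (k : ℝ) / l ≤ wAWGNC x := by
  have hQ : 0 < ∑ i, x i ^ 2 := by
    refine lt_of_le_of_ne (by positivity) (Ne.symm fun h => hx.2 ?_)
    ext i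
    simpa using (Finset.sum_eq_zero_iff_of_nonneg fun i _ => sq_nonneg (x i)).1 h i
  have hl' : (0 : ℝ) < l := by exact_mod_cast hl
  rw [wAWGNC, le_div_iff₀ hQ, one_add_div hl'.ne', div_mul_eq_mul_div, div_le_iff₀ hl']
  linarith [sum_sq_le_of_mem_fundCone hlk hrow hcol hint hx.1]

end SymmetricDesign

theorem le_minPW {J I : Type*} [Fintype J] [Fintype I] [DecidableEq I] {w : (I → ℝ) → ℝ}
    {H : Matrix J I (ZMod 2)} {c : ℝ} (h : ∀ x ∈ fundCone H \ {0}, c ≤ w x) :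
    (c : EReal) ≤ minPW w H :=
  le_sInf <| by rintro _ ⟨x, hx, rfl⟩; exact EReal.coe_le_coe_iff.2 (h x hx)

/-- Let `m ≥ 3`, `n = 2^m - 1`, `w = 2^(m-1) - 1`, and let `H` be an `n × n`
binary matrix all of whose rows and columns have Hamming weight exactly `w`, such that the
supports of any two distinct rows intersect in exactly `2^(m-2) - 1` positions.  Then every
nonzero pseudocodeword `x ∈ K(H)` satisfies `w_AWGNC(x) ≥ 3 + 1/(2^(m-2) - 1)`;
in particular `w_AWGNC^min(H) > 3`, and for `m = 3` one has `w_AWGNC^min(H) ≥ 4`. -/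
theorem statement14 (m : ℕ) (hm : 3 ≤ m)
    (H : Matrix (Fin (2 ^ m - 1)) (Fin (2 ^ m - 1)) (ZMod 2))
    (hrow : ∀ j, (rowSupp H j).card = 2 ^ (m - 1) - 1)
    (hcol : ∀ i, (Finset.univ.filter fun j => H j i = 1).card = 2 ^ (m - 1) - 1)
    (hint : ∀ j j', j ≠ j' → (rowSupp H j ∩ rowSupp H j').card = 2 ^ (m - 2) - 1) :
    (∀ x ∈ fundCone H \ {0}, 3 + 1 / ((2 : ℝ) ^ (m - 2) - 1) ≤ wAWGNC x) ∧
    ((3 : ℝ) : EReal) < minPW wAWGNC H ∧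
    (m = 3 → ((4 : ℝ) : EReal) ≤ minPW wAWGNC H) := by
  have hpow : 2 ^ (m - 1) = 2 * 2 ^ (m - 2) := by rw [← pow_succ']; congr 1; omega
  have hpow2 : 2 ≤ 2 ^ (m - 2) := le_self_pow₀ one_le_two (by omega)
  have hl : (0 : ℝ) < 2 ^ (m - 2) - 1 := by
    linarith [le_self_pow₀ (one_le_two : (1 : ℝ) ≤ 2) (by omega : m - 2 ≠ 0)]
  have hbound : ∀ x ∈ fundCone H \ {0}, 3 + 1 / ((2 : ℝ) ^ (m - 2) - 1) ≤ wAWGNC x := by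
    intro x hx
    have hk : ((2 ^ (m - 1) - 1 : ℕ) : ℝ) = 2 * ((2 : ℝ) ^ (m - 2) - 1) + 1 := by
      rw [Nat.cast_sub (by omega), hpow]; push_cast; ring
    calc 3 + 1 / ((2 : ℝ) ^ (m - 2) - 1)
        = 1 + ((2 ^ (m - 1) - 1 : ℕ) : ℝ) / ((2 ^ (m - 2) - 1 : ℕ) : ℝ) := by
          rw [hk, Nat.cast_sub (by omega)]; push_cast; field_simp [hl.ne']; ring
      _ ≤ wAWGNC x := le_wAWGNC_of_mem_fundCone (by omega) (by omega) hrow hcol hint hx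
  refine ⟨hbound, ?_, fun hm3 => ?_⟩
  · exact (EReal.coe_lt_coe_iff.2 (lt_add_of_pos_right 3 (one_div_pos.2 hl))).trans_le
      (le_minPW hbound)
  · subst hm3
    exact (by norm_num : (4 : ℝ) = 3 + 1 / ((2 : ℝ) ^ (3 - 2) - 1)) ▸ le_minPW hbound
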